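/- On the open region of Kepler phase space where H > 0 and M ≠ 0, the rescaled integrals K_i = A_i / √(2H) together with M satisfy the so(2,1) commutation relations: {M, K_1} = −K_2, {M, K_2} = K_1, {K_1, K_2} = M, and moreover K_1² + K_2² − M² = 1/(2H). -/

import Mathlib

open scoped BigOperators

/-- Partial derivative in the `q^i` direction on `ℝ^{2n} = (Fin n → ℝ) × (Fin n → ℝ)`. -/
noncomputable def dq {n : ℕ} (f : (Fin n → ℝ) × (Fin n → ℝ) → ℝ) (i : Fin n)
    (x : (Fin n → ℝ) × (Fin n → ℝ)) : ℝ :=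
  fderiv ℝ f x (Pi.single i 1, 0)

/-- Partial derivative in the `p_i` direction. -/
noncomputable def dp {n : ℕ} (f : (Fin n → ℝ) × (Fin n → ℝ) → ℝ) (i : Fin n)
    (x : (Fin n → ℝ) × (Fin n → ℝ)) : ℝ :=
  fderiv ℝ f x (0, Pi.single i 1)

/-- Canonical Poisson bracket `{f,g} = Σ_i (∂_{p_i}f ∂_{q^i}g − ∂_{q^i}f ∂_{p_i}g)`. -/
noncomputable def pb {n : ℕ} (f g : (Fin n → ℝ) × (Fin n → ℝ) → ℝ)
    (x : (Fin n → ℝ) × (Fin n → ℝ)) : ℝ :=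
  ∑ i, (dp f i x * dq g i x - dq f i x * dp g i x)


/-- Kepler Hamiltonian `H = p²/2 − 1/r` on `ℝ⁴` (junk value at `q = 0`). -/
noncomputable def keplerH (x : (Fin 2 → ℝ) × (Fin 2 → ℝ)) : ℝ :=
  (x.2 0 ^ 2 + x.2 1 ^ 2) / 2 - 1 / Real.sqrt (x.1 0 ^ 2 + x.1 1 ^ 2)

/-- Angular momentum `M = q_1 p_2 − q_2 p_1`. -/
def angM (x : (Fin 2 → ℝ) × (Fin 2 → ℝ)) : ℝ :=
  x.1 0 * x.2 1 - x.1 1 * x.2 0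

/-- Runge–Lenz vector components `A_i = q_i p² − p_i (p,q) − q_i/r`. -/
noncomputable def rungeLenz (i : Fin 2) (x : (Fin 2 → ℝ) × (Fin 2 → ℝ)) : ℝ :=
  x.1 i * (x.2 0 ^ 2 + x.2 1 ^ 2) - x.2 i * (x.2 0 * x.1 0 + x.2 1 * x.1 1)
    - x.1 i / Real.sqrt (x.1 0 ^ 2 + x.1 1 ^ 2)

/-- Rescaled Runge–Lenz components `K_i = A_i / √(2H)` on the region `H > 0`. -/
noncomputable def kepK (i : Fin 2) (x : (Fin 2 → ℝ) × (Fin 2 → ℝ)) : ℝ :=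
  rungeLenz i x / Real.sqrt (2 * keplerH x)

/-!
The angular momentum `M` generates rotations: `H` is rotation invariant and `(A_1, A_2)` rotates
as a vector. The Runge–Lenz vector is conserved, `{A_1, A_2} = 2HM` and `A_1² + A_2² = 1 + 2HM²`.
Since `K_i = A_i φ(H)` with `φ(h) = (2h)^(-1/2)` and `H` Poisson-commutes with `M` and with `A_i`,
the Leibniz and chain rules give `{M, K_i} = {M, A_i} φ(H)` and `{K_1, K_2} = {A_1, A_2} φ(H)²`;
the factor `φ(H)² = 1/(2H)` cancels the `2H`.
-/

open ContinuousLinearMap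

theorem fderiv_fun_mul_apply {E : Type*} [NormedAddCommGroup E] [NormedSpace ℝ E] {g h : E → ℝ}
    {x : E} (hg : DifferentiableAt ℝ g x) (hh : DifferentiableAt ℝ h x) (v : E) :
    fderiv ℝ (fun y => g y * h y) x v = fderiv ℝ g x v * h x + g x * fderiv ℝ h x v := by
  rw [fderiv_fun_mul hg hh, add_apply, smul_apply, smul_apply, smul_eq_mul, smul_eq_mul]
  ring

theorem fderiv_comp_apply {E : Type*} [NormedAddCommGroup E] [NormedSpace ℝ E] {g : E → ℝ}
    {x : E} {φ : ℝ → ℝ} (hφ : DifferentiableAt ℝ φ (g x)) (hg : DifferentiableAt ℝ g x) (v : E) :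
    fderiv ℝ (fun y => φ (g y)) x v = deriv φ (g x) * fderiv ℝ g x v := by
  have hφg : HasFDerivAt (fun y => φ (g y)) (deriv φ (g x) • fderiv ℝ g x) x :=
    hφ.hasDerivAt.comp_hasFDerivAt x hg.hasFDerivAt
  rw [hφg.fderiv, smul_apply, smul_eq_mul]

section PoissonBracket

variable {n : ℕ} {f g h : (Fin n → ℝ) × (Fin n → ℝ) → ℝ} {x : (Fin n → ℝ) × (Fin n → ℝ)}

theorem pb_anticomm (f g : (Fin n → ℝ) × (Fin n → ℝ) → ℝ) (x : (Fin n → ℝ) × (Fin n → ℝ)) :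
    pb f g x = -pb g f x := by
  simp only [pb, ← Finset.sum_neg_distrib, neg_sub, mul_comm]

theorem pb_self (f : (Fin n → ℝ) × (Fin n → ℝ) → ℝ) (x : (Fin n → ℝ) × (Fin n → ℝ)) :
    pb f f x = 0 := by
  simp only [pb, mul_comm, sub_self, Finset.sum_const_zero]

theorem pb_eq_of_hasFDerivAt {F G : ((Fin n → ℝ) × (Fin n → ℝ)) →L[ℝ] ℝ}
    (hf : HasFDerivAt f F x) (hg : HasFDerivAt g G x) :
    pb f g x = ∑ i, (F (0, Pi.single i 1) * G (Pi.single i 1, 0)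
      - F (Pi.single i 1, 0) * G (0, Pi.single i 1)) := by
  simp only [pb, dq, dp, hf.fderiv, hg.fderiv]

theorem pb_mul_right (hg : DifferentiableAt ℝ g x) (hh : DifferentiableAt ℝ h x) :
    pb f (fun y => g y * h y) x = pb f g x * h x + g x * pb f h x := by
  simp only [pb, dq, dp, fderiv_fun_mul_apply hg hh, Finset.sum_mul, Finset.mul_sum,
    ← Finset.sum_add_distrib]
  congr 1; ext; ring

theorem pb_comp_right {φ : ℝ → ℝ} (hφ : DifferentiableAt ℝ φ (g x))
    (hg : DifferentiableAt ℝ g x) :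
    pb f (fun y => φ (g y)) x = deriv φ (g x) * pb f g x := by
  simp only [pb, dq, dp, fderiv_comp_apply hφ hg, Finset.mul_sum]
  congr 1; ext; ring

theorem pb_mul_comp_right {φ : ℝ → ℝ} (hg : DifferentiableAt ℝ g x)
    (hφ : DifferentiableAt ℝ φ (h x)) (hh : DifferentiableAt ℝ h x) (hfh : pb f h x = 0) :
    pb f (fun y => g y * φ (h y)) x = pb f g x * φ (h x) := by
  have hφh : DifferentiableAt ℝ (fun y => φ (h y)) x := hφ.comp x hh
  rw [pb_mul_right hg hφh, pb_comp_right hφ hh, hfh, mul_zero, mul_zero, add_zero]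

theorem pb_mul_comp_mul_comp {φ : ℝ → ℝ} (hf : DifferentiableAt ℝ f x)
    (hg : DifferentiableAt ℝ g x) (hφ : DifferentiableAt ℝ φ (h x))
    (hh : DifferentiableAt ℝ h x) (hfh : pb f h x = 0) (hgh : pb g h x = 0) :
    pb (fun y => f y * φ (h y)) (fun y => g y * φ (h y)) x = pb f g x * φ (h x) ^ 2 := by
  have hhf : pb h f x = 0 := by rw [pb_anticomm, hfh, neg_zero]
  have hfφh : pb (fun y => f y * φ (h y)) h x = 0 := by
    rw [pb_anticomm, pb_mul_comp_right hf hφ hh (pb_self h x), hhf, zero_mul, neg_zero]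
  have hgf : pb g (fun y => f y * φ (h y)) x = pb g f x * φ (h x) :=
    pb_mul_comp_right hf hφ hh hgh
  rw [pb_mul_comp_right hg hφ hh hfφh, pb_anticomm, hgf, pb_anticomm g]
  ring

end PoissonBracket

section KeplerDerivatives

variable {x : (Fin 2 → ℝ) × (Fin 2 → ℝ)}

noncomputable def radius (x : (Fin 2 → ℝ) × (Fin 2 → ℝ)) : ℝ := √(x.1 0 ^ 2 + x.1 1 ^ 2)

noncomputable def qCoord (i : Fin 2) : ((Fin 2 → ℝ) × (Fin 2 → ℝ)) →L[ℝ] ℝ :=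
  (proj i).comp (fst ℝ _ _)

noncomputable def pCoord (i : Fin 2) : ((Fin 2 → ℝ) × (Fin 2 → ℝ)) →L[ℝ] ℝ :=
  (proj i).comp (snd ℝ _ _)

@[simp] theorem qCoord_apply (i : Fin 2) (v : (Fin 2 → ℝ) × (Fin 2 → ℝ)) : qCoord i v = v.1 i :=
  rfl

@[simp] theorem pCoord_apply (i : Fin 2) (v : (Fin 2 → ℝ) × (Fin 2 → ℝ)) : pCoord i v = v.2 i :=
  rfl

theorem sq_add_sq_pos_of_fst_ne_zero (hq : x.1 ≠ 0) : 0 < x.1 0 ^ 2 + x.1 1 ^ 2 := by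
  obtain ⟨i, hi⟩ := Function.ne_iff.mp hq
  fin_cases i <;> simp only [Pi.zero_apply] at hi <;> positivity

theorem radius_pos (hq : x.1 ≠ 0) : 0 < radius x :=
  Real.sqrt_pos.2 (sq_add_sq_pos_of_fst_ne_zero hq)

theorem radius_sq (x : (Fin 2 → ℝ) × (Fin 2 → ℝ)) : radius x ^ 2 = x.1 0 ^ 2 + x.1 1 ^ 2 :=
  Real.sq_sqrt (by positivity)

theorem keplerH_eq (x : (Fin 2 → ℝ) × (Fin 2 → ℝ)) :
    keplerH x = (x.2 0 ^ 2 + x.2 1 ^ 2) / 2 - (radius x)⁻¹ := by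
  rw [keplerH, radius, one_div]

theorem rungeLenz_eq (i : Fin 2) (x : (Fin 2 → ℝ) × (Fin 2 → ℝ)) :
    rungeLenz i x = x.1 i * (x.2 0 ^ 2 + x.2 1 ^ 2) - x.2 i * (x.2 0 * x.1 0 + x.2 1 * x.1 1)
      - x.1 i / radius x :=
  rfl

theorem hasFDerivAt_inv_radius (hq : x.1 ≠ 0) :
    HasFDerivAt (fun y => (radius y)⁻¹)
      (-(radius x ^ 3)⁻¹ • (x.1 0 • qCoord 0 + x.1 1 • qCoord 1)) x := by
  have hsq : HasFDerivAt (fun y : (Fin 2 → ℝ) × (Fin 2 → ℝ) => y.1 0 ^ 2 + y.1 1 ^ 2)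
      ((2 * x.1 0) • qCoord 0 + (2 * x.1 1) • qCoord 1) x := by
    refine (((qCoord 0).hasFDerivAt.pow 2).add ((qCoord 1).hasFDerivAt.pow 2)).congr_fderiv
      (ext fun v => ?_)
    simp
  refine ((hasDerivAt_inv (radius_pos hq).ne').comp_hasFDerivAt x
    ((Real.hasDerivAt_sqrt (sq_add_sq_pos_of_fst_ne_zero hq).ne').comp_hasFDerivAt x
      hsq)).congr_fderiv (ext fun v => ?_)
  simp only [radius, one_div, mul_inv_rev, smul_add, neg_smul, add_apply, neg_apply, smul_apply,
    qCoord_apply, smul_eq_mul]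
  field_simp

theorem hasFDerivAt_angM (x : (Fin 2 → ℝ) × (Fin 2 → ℝ)) :
    HasFDerivAt angM
      (x.2 1 • qCoord 0 + x.1 0 • pCoord 1 - (x.2 0 • qCoord 1 + x.1 1 • pCoord 0)) x := by
  refine (((qCoord 0).hasFDerivAt.mul (pCoord 1).hasFDerivAt).sub
    ((qCoord 1).hasFDerivAt.mul (pCoord 0).hasFDerivAt)).congr_fderiv (ext fun v => ?_)
  simp only [qCoord_apply, pCoord_apply, sub_apply, add_apply, smul_apply, smul_eq_mul]
  ring

theorem hasFDerivAt_keplerH (hq : x.1 ≠ 0) :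
    HasFDerivAt keplerH (x.2 0 • pCoord 0 + x.2 1 • pCoord 1
      + (radius x ^ 3)⁻¹ • (x.1 0 • qCoord 0 + x.1 1 • qCoord 1)) x := by
  simp only [funext keplerH_eq, div_eq_mul_inv]
  refine (((((pCoord 0).hasFDerivAt.pow 2).add ((pCoord 1).hasFDerivAt.pow 2)).mul_const 2⁻¹).sub
    (hasFDerivAt_inv_radius hq)).congr_fderiv (ext fun v => ?_)
  simp only [pCoord_apply, qCoord_apply, Nat.add_one_sub_one, pow_one, nsmul_eq_mul,
    Nat.cast_ofNat, smul_add, neg_smul, sub_apply, add_apply, smul_apply, smul_eq_mul, neg_apply]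
  ring

theorem hasFDerivAt_rungeLenz (hq : x.1 ≠ 0) (i : Fin 2) :
    HasFDerivAt (rungeLenz i)
      ((x.2 0 ^ 2 + x.2 1 ^ 2 - (radius x)⁻¹) • qCoord i
        + (2 * x.1 i) • (x.2 0 • pCoord 0 + x.2 1 • pCoord 1)
        - (x.2 0 * x.1 0 + x.2 1 * x.1 1) • pCoord i
        - x.2 i • (x.1 0 • pCoord 0 + x.1 1 • pCoord 1 + x.2 0 • qCoord 0 + x.2 1 • qCoord 1)
        + (x.1 i / radius x ^ 3) • (x.1 0 • qCoord 0 + x.1 1 • qCoord 1)) x := by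
  simp only [funext (rungeLenz_eq i), div_eq_mul_inv]
  refine ((((qCoord i).hasFDerivAt.mul
    (((pCoord 0).hasFDerivAt.pow 2).add ((pCoord 1).hasFDerivAt.pow 2))).sub
    ((pCoord i).hasFDerivAt.mul (((pCoord 0).hasFDerivAt.mul (qCoord 0).hasFDerivAt).add
      ((pCoord 1).hasFDerivAt.mul (qCoord 1).hasFDerivAt)))).sub
    ((qCoord i).hasFDerivAt.mul (hasFDerivAt_inv_radius hq))).congr_fderiv (ext fun v => ?_)
  simp only [qCoord_apply, pCoord_apply, Nat.add_one_sub_one, pow_one, nsmul_eq_mul,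
    Nat.cast_ofNat, smul_add, Pi.add_apply, Pi.mul_apply, neg_smul, smul_neg, sub_apply, add_apply,
    smul_apply, smul_eq_mul, neg_apply]
  ring

end KeplerDerivatives

section KeplerBrackets

variable {x : (Fin 2 → ℝ) × (Fin 2 → ℝ)}

theorem pb_angM_keplerH (hq : x.1 ≠ 0) : pb angM keplerH x = 0 := by
  rw [pb_eq_of_hasFDerivAt (hasFDerivAt_angM x) (hasFDerivAt_keplerH hq)]
  simp only [Fin.sum_univ_two, add_apply, sub_apply, smul_apply, smul_eq_mul, qCoord_apply,
    pCoord_apply, Pi.zero_apply, Pi.single_eq_same, Pi.single_eq_of_ne, ne_eq, one_ne_zero,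
    zero_ne_one, not_false_eq_true]
  ring

theorem pb_rungeLenz_keplerH (hq : x.1 ≠ 0) (i : Fin 2) : pb (rungeLenz i) keplerH x = 0 := by
  have hr := radius_pos hq
  have hr2 := radius_sq x
  fin_cases i <;>
  · rw [pb_eq_of_hasFDerivAt (hasFDerivAt_rungeLenz hq _) (hasFDerivAt_keplerH hq)]
    simp only [Fin.sum_univ_two, add_apply, sub_apply, smul_apply, smul_eq_mul, qCoord_apply,
      pCoord_apply, Pi.zero_apply, Pi.single_eq_same, Pi.single_eq_of_ne, ne_eq, one_ne_zero,
      zero_ne_one, not_false_eq_true]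
    field_simp
    grind

theorem pb_angM_rungeLenz_zero (hq : x.1 ≠ 0) : pb angM (rungeLenz 0) x = -rungeLenz 1 x := by
  rw [pb_eq_of_hasFDerivAt (hasFDerivAt_angM x) (hasFDerivAt_rungeLenz hq _), rungeLenz_eq]
  simp only [Fin.sum_univ_two, add_apply, sub_apply, smul_apply, smul_eq_mul, qCoord_apply,
    pCoord_apply, Pi.zero_apply, Pi.single_eq_same, Pi.single_eq_of_ne, ne_eq, one_ne_zero,
    zero_ne_one, not_false_eq_true]
  ring

theorem pb_angM_rungeLenz_one (hq : x.1 ≠ 0) : pb angM (rungeLenz 1) x = rungeLenz 0 x := by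
  rw [pb_eq_of_hasFDerivAt (hasFDerivAt_angM x) (hasFDerivAt_rungeLenz hq _), rungeLenz_eq]
  simp only [Fin.sum_univ_two, add_apply, sub_apply, smul_apply, smul_eq_mul, qCoord_apply,
    pCoord_apply, Pi.zero_apply, Pi.single_eq_same, Pi.single_eq_of_ne, ne_eq, one_ne_zero,
    zero_ne_one, not_false_eq_true]
  ring

/-- `pb` is minus the usual bracket, so the classical `{A_1, A_2} = -2HM` changes sign. -/
theorem pb_rungeLenz_zero_one (hq : x.1 ≠ 0) :
    pb (rungeLenz 0) (rungeLenz 1) x = 2 * keplerH x * angM x := by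
  have hr := radius_pos hq
  have hr2 := radius_sq x
  rw [pb_eq_of_hasFDerivAt (hasFDerivAt_rungeLenz hq _) (hasFDerivAt_rungeLenz hq _), keplerH_eq,
    angM]
  simp only [Fin.sum_univ_two, add_apply, sub_apply, smul_apply, smul_eq_mul, qCoord_apply,
    pCoord_apply, Pi.zero_apply, Pi.single_eq_same, Pi.single_eq_of_ne, ne_eq, one_ne_zero,
    zero_ne_one, not_false_eq_true]
  field_simp
  grind

theorem rungeLenz_sq_add_sq (hq : x.1 ≠ 0) :
    rungeLenz 0 x ^ 2 + rungeLenz 1 x ^ 2 = 1 + 2 * keplerH x * angM x ^ 2 := by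
  have hr := radius_pos hq
  have hr2 := radius_sq x
  rw [keplerH_eq, rungeLenz_eq, rungeLenz_eq, angM]
  field_simp
  grind

end KeplerBrackets

/-- On the region `H > 0`, `M ≠ 0`, the integrals `(M, K_1, K_2)` satisfy the
`so(2,1)` commutation relations, and `K² − M² = 1/(2H)`. -/
theorem kepler_so21_relations :
    ∀ x : (Fin 2 → ℝ) × (Fin 2 → ℝ), x.1 ≠ 0 → 0 < keplerH x → angM x ≠ 0 →
      pb angM (kepK 0) x = -(kepK 1 x) ∧
      pb angM (kepK 1) x = kepK 0 x ∧
      pb (kepK 0) (kepK 1) x = angM x ∧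
      kepK 0 x ^ 2 + kepK 1 x ^ 2 - angM x ^ 2 = 1 / (2 * keplerH x) := by
  intro x hq hH _
  set φ : ℝ → ℝ := fun t => (√(2 * t))⁻¹ with hφ_def
  have hK : ∀ i, kepK i = fun y => rungeLenz i y * φ (keplerH y) :=
    fun i => funext fun y => div_eq_mul_inv _ _
  have hφ : DifferentiableAt ℝ φ (keplerH x) := by
    have hs : 0 < √(2 * keplerH x) := by positivity
    fun_prop (disch := first | positivity | exact hs.ne')
  have hφ_sq : φ (keplerH x) ^ 2 = (2 * keplerH x)⁻¹ := by
    rw [hφ_def, inv_pow, Real.sq_sqrt (by positivity)]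
  have hA_diff := fun i => (hasFDerivAt_rungeLenz hq i).differentiableAt
  have hH_diff := (hasFDerivAt_keplerH hq).differentiableAt
  refine ⟨?_, ?_, ?_, ?_⟩
  · rw [hK, hK, pb_mul_comp_right (hA_diff 0) hφ hH_diff (pb_angM_keplerH hq),
      pb_angM_rungeLenz_zero hq, neg_mul]
  · rw [hK, hK, pb_mul_comp_right (hA_diff 1) hφ hH_diff (pb_angM_keplerH hq),
      pb_angM_rungeLenz_one hq]
  · rw [hK, hK, pb_mul_comp_mul_comp (hA_diff 0) (hA_diff 1) hφ hH_diff
      (pb_rungeLenz_keplerH hq 0) (pb_rungeLenz_keplerH hq 1), pb_rungeLenz_zero_one hq, hφ_sq]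
    field_simp
  · rw [hK, hK]
    simp only [mul_pow, hφ_sq, ← add_mul, rungeLenz_sq_add_sq hq]
    field_simp
    ring
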